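/- Let d ≥ 1, let 0 < p ≤ 1, and let ρ_m = p|ψ_d⟩⟨ψ_d| + ((1-p)/d)·I_d with |ψ_d⟩ = (1/√d)·Σ_{i=1}^d |i⟩. Then the geometric measure of coherence of ρ_m equals C_g(ρ_m) = 1 - [√(1-p) + (1/d)·(√(1-p+dp) - √(1-p))]². -/

import Mathlib

open scoped ComplexOrder

open Matrix Classical in
/-- The positive semidefinite square root of a matrix (junk value `0` if not PSD). -/
noncomputable def msqrt {d : ℕ} (A : Matrix (Fin d) (Fin d) ℂ) : Matrix (Fin d) (Fin d) ℂ :=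
  if h : A.PosSemidef then
    (h.1.eigenvectorUnitary : Matrix (Fin d) (Fin d) ℂ) * diagonal ((↑) ∘ Real.sqrt ∘ h.1.eigenvalues) *
      (star h.1.eigenvectorUnitary : Matrix (Fin d) (Fin d) ℂ)
  else 0

/-- A density matrix: positive semidefinite with trace 1. -/
def IsDensity {d : ℕ} (ρ : Matrix (Fin d) (Fin d) ℂ) : Prop :=
  ρ.PosSemidef ∧ ρ.trace = 1

/-- An incoherent state: a diagonal density matrix. -/
def IsIncoherent {d : ℕ} (σ : Matrix (Fin d) (Fin d) ℂ) : Prop :=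
  IsDensity σ ∧ σ.IsDiag

/-- The fidelity `F(ρ,σ) = (Tr √(√σ ρ √σ))²`. -/
noncomputable def fid {d : ℕ} (ρ σ : Matrix (Fin d) (Fin d) ℂ) : ℝ :=
  ((msqrt (msqrt σ * ρ * msqrt σ)).trace.re) ^ 2

/-- The geometric measure of coherence `C_g(ρ) = 1 - sup {F(ρ,σ) : σ incoherent}`. -/
noncomputable def Cg {d : ℕ} (ρ : Matrix (Fin d) (Fin d) ℂ) : ℝ :=
  1 - sSup {x : ℝ | ∃ σ : Matrix (Fin d) (Fin d) ℂ, IsIncoherent σ ∧ x = fid ρ σ}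

/-- The projector `|ψ_d⟩⟨ψ_d|` onto the maximally coherent state, with all entries `1/d`. -/
noncomputable def psiProj (d : ℕ) : Matrix (Fin d) (Fin d) ℂ :=
  Matrix.of fun _ _ => (1 / d : ℂ)

/-- The maximally coherent mixed state `ρ_m = p |ψ_d⟩⟨ψ_d| + ((1-p)/d) I_d`. -/
noncomputable def rhoM (d : ℕ) (p : ℝ) : Matrix (Fin d) (Fin d) ℂ :=
  (p : ℂ) • psiProj d + (((1 - p) / d : ℝ) : ℂ) • (1 : Matrix (Fin d) (Fin d) ℂ)

open Matrix

open scoped MatrixOrder in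
lemma msqrt_eq_csqrt {d : ℕ} {A : Matrix (Fin d) (Fin d) ℂ} (hA : A.PosSemidef) :
    msqrt A = CFC.sqrt A := by
  rw [msqrt, dif_pos hA, CFC.sqrt_eq_cfc, cfc_nnreal_eq_real _ A, hA.1.cfc_eq]
  simp only [IsHermitian.cfc, Unitary.conjStarAlgAut_apply, Real.coe_sqrt, Real.coe_toNNReal']
  congr 3
  funext i
  simp [max_eq_left (hA.eigenvalues_nonneg i)]

open scoped MatrixOrder in
lemma msqrt_eq {d : ℕ} {A B : Matrix (Fin d) (Fin d) ℂ} (hB : B.PosSemidef)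
    (h : B * B = A) : msqrt A = B := by
  have hA : A.PosSemidef := by
    rw [← h]; simpa [pow_two] using hB.pow 2
  rw [msqrt_eq_csqrt hA, CFC.sqrt_eq_iff _ _ hA.nonneg hB.nonneg]
  exact h

open scoped MatrixOrder in
lemma msqrt_posSemidef {d : ℕ} {A : Matrix (Fin d) (Fin d) ℂ} (hA : A.PosSemidef) :
    (msqrt A).PosSemidef := by
  rw [msqrt_eq_csqrt hA]; exact (CFC.sqrt_nonneg A).posSemidef

open scoped MatrixOrder in
lemma msqrt_mul_self {d : ℕ} {A : Matrix (Fin d) (Fin d) ℂ} (hA : A.PosSemidef) :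
    msqrt A * msqrt A = A := by
  rw [msqrt_eq_csqrt hA]; exact CFC.sqrt_mul_sqrt_self A hA.nonneg

-- entries of PSD matrix: diagonal nonneg real
lemma psd_diag_entry {d : ℕ} {A : Matrix (Fin d) (Fin d) ℂ} (hA : A.PosSemidef)
    (i : Fin d) : 0 ≤ A i i := by
  have := hA.dotProduct_mulVec_nonneg (Pi.single i 1)
  simpa [dotProduct, Pi.single_apply, mulVec] using this

lemma trace_re_nonneg {d : ℕ} {A : Matrix (Fin d) (Fin d) ℂ} (hA : A.PosSemidef) :
    0 ≤ A.trace.re := by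
  rw [trace]
  simp only [Complex.re_sum]
  exact Finset.sum_nonneg fun i _ => (Complex.nonneg_iff.mp (psd_diag_entry hA i)).1

-- Key lemma: for any X, msqrt (Xᴴ * X) = Vᴴ * X for some contraction V
lemma exists_contraction {d : ℕ} (X : Matrix (Fin d) (Fin d) ℂ) :
    ∃ V : Matrix (Fin d) (Fin d) ℂ,
      (1 - Vᴴ * V).PosSemidef ∧ msqrt (Xᴴ * X) = Vᴴ * X := by
  have hM : (Xᴴ * X).PosSemidef := posSemidef_conjTranspose_mul_self X
  set M := Xᴴ * X with hMdef
  have hH := hM.1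
  set ev : Fin d → ℝ := hH.eigenvalues with hev
  set U : Matrix (Fin d) (Fin d) ℂ := (hH.eigenvectorUnitary : Matrix (Fin d) (Fin d) ℂ)
    with hU
  have hUU : star U * U = 1 := (mem_unitaryGroup_iff').mp hH.eigenvectorUnitary.2
  have hUU' : U * star U = 1 := (mem_unitaryGroup_iff).mp hH.eigenvectorUnitary.2
  have hspec : M = U * diagonal (Complex.ofReal ∘ ev) * star U := hH.spectral_theorem
  have hevnn : ∀ i, 0 ≤ ev i := hM.eigenvalues_nonneg
  set D : Matrix (Fin d) (Fin d) ℂ := diagonal (fun i => (Real.sqrt (ev i) : ℂ)) with hD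
  set G : Matrix (Fin d) (Fin d) ℂ :=
    diagonal (fun i => ((if ev i = 0 then 0 else (Real.sqrt (ev i))⁻¹ : ℝ) : ℂ)) with hG
  set H : Matrix (Fin d) (Fin d) ℂ := U * D * star U with hHm
  set Hp : Matrix (Fin d) (Fin d) ℂ := U * G * star U with hHp
  have conjmul : ∀ A B : Matrix (Fin d) (Fin d) ℂ,
      (U * A * star U) * (U * B * star U) = U * (A * B) * star U := by
    intro A B
    calc (U * A * star U) * (U * B * star U) = U * A * (star U * U) * B * star U := by
          noncomm_ring
      _ = U * (A * B) * star U := by rw [hUU]; noncomm_ring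
  have hHpsd : H.PosSemidef := by
    have hDpsd : D.PosSemidef := posSemidef_diagonal_iff.mpr fun i =>
      Complex.zero_le_real.mpr (Real.sqrt_nonneg (ev i))
    have := hDpsd.mul_mul_conjTranspose_same U
    rwa [hHm, Matrix.star_eq_conjTranspose]
  have hDD : D * D = diagonal (Complex.ofReal ∘ ev) := by
    rw [hD, diagonal_mul_diagonal]
    exact congrArg Matrix.diagonal (funext fun i => by
      rw [← Complex.ofReal_mul, Real.mul_self_sqrt (hevnn i)]; rfl)
  have hHsq : H * H = M := by
    rw [hHm, conjmul, hDD, ← hspec]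
  have hmsqrt : msqrt M = H := msqrt_eq hHpsd hHsq
  have hGherm : Gᴴ = G := by
    rw [hG, diagonal_conjTranspose]
    exact congrArg Matrix.diagonal (funext fun i => by
      simp [Pi.star_apply, Complex.star_def, Complex.conj_ofReal])
  have hHpherm : Hpᴴ = Hp := by
    rw [hHp, Matrix.star_eq_conjTranspose, conjTranspose_mul, conjTranspose_mul,
      conjTranspose_conjTranspose, hGherm, mul_assoc]
  have hGL : G * diagonal (Complex.ofReal ∘ ev) = D := by
    rw [hG, hD, diagonal_mul_diagonal]
    refine congrArg Matrix.diagonal (funext fun i => ?_)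
    by_cases h : ev i = 0
    · simp [h]
    · have hs : Real.sqrt (ev i) ≠ 0 := by
        have hpos : 0 < ev i := lt_of_le_of_ne (hevnn i) (Ne.symm h)
        positivity
      have hmul : (Real.sqrt (ev i))⁻¹ * ev i = Real.sqrt (ev i) := by
        rw [inv_mul_eq_div, div_eq_iff hs, Real.mul_self_sqrt (hevnn i)]
      simp only [Function.comp_apply, if_neg h, ← Complex.ofReal_mul, hmul]
  have hHpM : Hp * M = H := by
    rw [hHp, hspec, conjmul, hGL, ← hHm]
  refine ⟨X * Hp, ?_, ?_⟩
  · have hVV : (X * Hp)ᴴ * (X * Hp) = U * (G * diagonal (Complex.ofReal ∘ ev) * G) * star U := by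
      calc (X * Hp)ᴴ * (X * Hp) = Hp * (Xᴴ * X) * Hp := by
            rw [conjTranspose_mul, hHpherm]; noncomm_ring
        _ = (U * G * star U) * ((U * diagonal (Complex.ofReal ∘ ev) * star U) * (U * G * star U))
              := by rw [← hHp, ← hspec, ← hMdef, mul_assoc]
        _ = U * (G * diagonal (Complex.ofReal ∘ ev) * G) * star U := by
              rw [conjmul, conjmul]; noncomm_ring
    rw [hVV]
    have h1 : (1 : Matrix (Fin d) (Fin d) ℂ) = U * 1 * star U := by
      rw [mul_one, hUU']
    rw [h1, show U * 1 * star U - U * (G * diagonal (Complex.ofReal ∘ ev) * G) * star U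
        = U * (1 - G * diagonal (Complex.ofReal ∘ ev) * G) * star U by noncomm_ring]
    rw [Matrix.star_eq_conjTranspose]
    apply PosSemidef.mul_mul_conjTranspose_same _ U
    rw [hGL, hG, hD, diagonal_mul_diagonal, ← diagonal_one, diagonal_sub]
    refine posSemidef_diagonal_iff.mpr fun i => ?_
    by_cases h : ev i = 0
    · simp [h]
    · have hs : Real.sqrt (ev i) ≠ 0 := by
        have hpos : 0 < ev i := lt_of_le_of_ne (hevnn i) (Ne.symm h)
        positivity
      have hone : (Real.sqrt (ev i) : ℂ) * ((if ev i = 0 then 0 else (Real.sqrt (ev i))⁻¹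
          : ℝ) : ℂ) = 1 := by
        rw [if_neg h, ← Complex.ofReal_mul, mul_inv_cancel₀ hs, Complex.ofReal_one]
      simp only [Pi.sub_apply, Pi.one_apply, hone, sub_self, le_refl]
  · rw [conjTranspose_mul, hHpherm, mul_assoc, ← hMdef, hHpM, hmsqrt]

lemma dot_star_self_re {d : ℕ} (z : Fin d → ℂ) :
    (star z ⬝ᵥ z).re = ∑ i, Complex.normSq (z i) := by
  rw [dotProduct]
  simp only [Pi.star_apply, RCLike.star_def]
  rw [Complex.re_sum]
  congr 1
  funext i
  rw [← Complex.normSq_eq_conj_mul_self]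
  simp

lemma contraction_diag {d : ℕ} {V : Matrix (Fin d) (Fin d) ℂ}
    (hV : (1 - Vᴴ * V).PosSemidef) (i : Fin d) : ‖V i i‖ ≤ 1 := by
  have h := psd_diag_entry hV i
  have h1 : ((1 - Vᴴ * V) i i) = 1 - (Vᴴ * V) i i := by
    simp [Matrix.sub_apply, Matrix.one_apply_eq]
  rw [h1] at h
  have h2 : ((Vᴴ * V) i i).re = ∑ j, Complex.normSq (V j i) := by
    rw [Matrix.mul_apply]
    rw [Complex.re_sum]
    congr 1
    funext j
    rw [conjTranspose_apply, RCLike.star_def, ← Complex.normSq_eq_conj_mul_self]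
    simp
  have h3 : ((Vᴴ * V) i i).re ≤ 1 := by
    have := (Complex.nonneg_iff.mp h).1
    simp only [Complex.sub_re, Complex.one_re] at this
    linarith
  have h4 : Complex.normSq (V i i) ≤ 1 := by
    rw [h2] at h3
    calc Complex.normSq (V i i) ≤ ∑ j, Complex.normSq (V j i) :=
          Finset.single_le_sum (f := fun j => Complex.normSq (V j i))
            (fun j _ => Complex.normSq_nonneg _) (Finset.mem_univ i)
      _ ≤ 1 := h3
  rw [Complex.norm_def]
  exact Real.sqrt_le_one.mpr h4

lemma contraction_mulVec {d : ℕ} {V : Matrix (Fin d) (Fin d) ℂ}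
    (hV : (1 - Vᴴ * V).PosSemidef) (x : Fin d → ℂ) :
    ∑ j, Complex.normSq ((V *ᵥ x) j) ≤ ∑ i, Complex.normSq (x i) := by
  have h := hV.dotProduct_mulVec_nonneg x
  rw [Matrix.sub_mulVec, Matrix.one_mulVec, dotProduct_sub] at h
  have hkey : star x ⬝ᵥ ((Vᴴ * V) *ᵥ x) = star (V *ᵥ x) ⬝ᵥ (V *ᵥ x) := by
    rw [← Matrix.mulVec_mulVec, Matrix.dotProduct_mulVec, ← Matrix.star_mulVec]
  rw [hkey] at h
  have := (Complex.nonneg_iff.mp h).1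
  rw [Complex.sub_re, dot_star_self_re, dot_star_self_re] at this
  linarith

lemma cmul_nonneg {z w : ℂ} (hz : 0 ≤ z) (hw : 0 ≤ w) : 0 ≤ z * w := by
  rw [Complex.nonneg_iff] at *
  obtain ⟨hz1, hz2⟩ := hz
  obtain ⟨hw1, hw2⟩ := hw
  constructor
  · simp [Complex.mul_re, ← hz2, ← hw2]
    positivity
  · simp [Complex.mul_im, ← hz2, ← hw2]

lemma psd_smul {d : ℕ} {A : Matrix (Fin d) (Fin d) ℂ} (hA : A.PosSemidef) {r : ℝ}
    (hr : 0 ≤ r) : ((r : ℂ) • A).PosSemidef := by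
  refine .of_dotProduct_mulVec_nonneg ?_ ?_
  · show ((r : ℂ) • A)ᴴ = (r : ℂ) • A
    rw [conjTranspose_smul, RCLike.star_def, Complex.conj_ofReal, hA.1.eq]
  · intro x
    rw [smul_mulVec, dotProduct_smul, smul_eq_mul]
    exact cmul_nonneg (Complex.zero_le_real.mpr hr) (hA.dotProduct_mulVec_nonneg x)

lemma msqrt_diagonal {d : ℕ} {f : Fin d → ℝ} (hf : ∀ i, 0 ≤ f i) :
    msqrt (diagonal fun i => (f i : ℂ)) = diagonal (fun i => (Real.sqrt (f i) : ℂ)) := by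
  refine msqrt_eq (posSemidef_diagonal_iff.mpr fun i =>
    Complex.zero_le_real.mpr (Real.sqrt_nonneg _)) ?_
  rw [diagonal_mul_diagonal]
  exact congrArg Matrix.diagonal (funext fun i => by
    rw [← Complex.ofReal_mul, Real.mul_self_sqrt (hf i)])


section psi
variable {d : ℕ}

lemma dchar (hd : 1 ≤ d) : (d : ℂ) ≠ 0 :=
  Nat.cast_ne_zero.mpr (Nat.one_le_iff_ne_zero.mp hd)

lemma psiProj_mul_self : psiProj d * psiProj d = psiProj d := by
  ext i j
  simp only [psiProj, Matrix.mul_apply, Matrix.of_apply, Finset.sum_const, Finset.card_univ,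
    Fintype.card_fin, nsmul_eq_mul]
  field_simp

lemma psiProj_posSemidef : (psiProj d).PosSemidef := by
  refine .of_dotProduct_mulVec_nonneg ?_ ?_
  · show (psiProj d)ᴴ = psiProj d
    ext i j
    simp [psiProj, conjTranspose_apply, ← Complex.ofReal_one, ← Complex.ofReal_natCast,
      ← Complex.ofReal_div, Complex.conj_ofReal]
  · intro x
    have hm : psiProj d *ᵥ x = fun _ => (1 / d : ℂ) * ∑ j, x j := by
      funext i
      simp [psiProj, mulVec, dotProduct, Finset.mul_sum]
    rw [hm]
    have : star x ⬝ᵥ (fun _ => (1 / d : ℂ) * ∑ j, x j)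
        = (1 / d : ℂ) * ((starRingEnd ℂ) (∑ j, x j) * (∑ j, x j)) := by
      simp only [dotProduct, Pi.star_apply, RCLike.star_def]
      rw [← Finset.sum_mul, map_sum]
      ring
    rw [this]
    refine cmul_nonneg ?_ ?_
    · rw [show (1 / d : ℂ) = ((1 / d : ℝ) : ℂ) by push_cast; ring]
      exact Complex.zero_le_real.mpr (by positivity)
    · rw [mul_comm, Complex.mul_conj]
      exact Complex.zero_le_real.mpr (Complex.normSq_nonneg _)

lemma psiProj_trace (hd : 1 ≤ d) : (psiProj d).trace = 1 := by
  rw [trace]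
  simp only [diag, psiProj, Matrix.of_apply, Finset.sum_const, Finset.card_univ,
    Fintype.card_fin, nsmul_eq_mul]
  rw [mul_one_div, div_self (dchar hd)]

end psi

lemma smul_one_add_smul_proj_sq {d : ℕ} (x y : ℂ) :
    (x • (1 : Matrix (Fin d) (Fin d) ℂ) + y • psiProj d)
      * (x • (1 : Matrix (Fin d) (Fin d) ℂ) + y • psiProj d)
    = (x * x) • (1 : Matrix (Fin d) (Fin d) ℂ) + (2 * x * y + y * y) • psiProj d := by
  rw [add_mul, mul_add, mul_add, smul_mul_smul_comm, smul_mul_smul_comm, smul_mul_smul_comm,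
    smul_mul_smul_comm, psiProj_mul_self, one_mul, mul_one, one_mul]
  module

lemma rhoM_eq {d : ℕ} (p : ℝ) : rhoM d p
    = (((1 - p) / d : ℝ) : ℂ) • (1 : Matrix (Fin d) (Fin d) ℂ) + (p : ℂ) • psiProj d := by
  rw [rhoM, add_comm]

lemma rhoM_posSemidef {d : ℕ} {p : ℝ} (hp0 : 0 ≤ p) (hp1 : p ≤ 1) :
    (rhoM d p).PosSemidef := by
  rw [rhoM_eq]
  exact (psd_smul Matrix.PosSemidef.one
    (div_nonneg (by linarith) (Nat.cast_nonneg d))).add (psd_smul psiProj_posSemidef hp0)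

lemma msqrt_rhoM {d : ℕ} {p : ℝ} (hp0 : 0 ≤ p) (hp1 : p ≤ 1) :
    msqrt (rhoM d p) = ((Real.sqrt ((1 - p) / d) : ℝ) : ℂ) • (1 : Matrix (Fin d) (Fin d) ℂ)
      + (((Real.sqrt ((1 - p) / d + p) - Real.sqrt ((1 - p) / d)) : ℝ) : ℂ) • psiProj d := by
  set b : ℝ := Real.sqrt ((1 - p) / d) with hb
  set a : ℝ := Real.sqrt ((1 - p) / d + p) with ha
  have hbd : (0:ℝ) ≤ (1 - p) / d := div_nonneg (by linarith) (Nat.cast_nonneg d)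
  have hab : b ≤ a := Real.sqrt_le_sqrt (by linarith)
  refine msqrt_eq ?_ ?_
  · exact (psd_smul Matrix.PosSemidef.one (Real.sqrt_nonneg _)).add
      (psd_smul psiProj_posSemidef (by linarith))
  · have h1 : b * b = (1 - p) / d := Real.mul_self_sqrt hbd
    have h2 : a * a = (1 - p) / d + p := Real.mul_self_sqrt (by linarith)
    have e1 : ((b : ℂ)) * (b : ℂ) = (((1 - p) / d : ℝ) : ℂ) := by
      rw [← Complex.ofReal_mul, h1]
    have e2 : 2 * (b : ℂ) * ((a - b : ℝ) : ℂ) + ((a - b : ℝ) : ℂ) * ((a - b : ℝ) : ℂ)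
        = (p : ℂ) := by
      have hr : 2 * b * (a - b) + (a - b) * (a - b) = p := by nlinarith
      calc 2 * (b : ℂ) * ((a - b : ℝ) : ℂ) + ((a - b : ℝ) : ℂ) * ((a - b : ℝ) : ℂ)
          = ((2 * b * (a - b) + (a - b) * (a - b) : ℝ) : ℂ) := by push_cast; ring
        _ = (p : ℂ) := by rw [hr]
    rw [smul_one_add_smul_proj_sq, rhoM_eq, e1, e2]

lemma msqrt_smul {d : ℕ} {A : Matrix (Fin d) (Fin d) ℂ} (hA : A.PosSemidef) {r : ℝ}
    (hr : 0 ≤ r) : msqrt ((r : ℂ) • A) = ((Real.sqrt r : ℝ) : ℂ) • msqrt A := by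
  refine msqrt_eq (psd_smul (msqrt_posSemidef hA) (Real.sqrt_nonneg _)) ?_
  rw [smul_mul_smul_comm, msqrt_mul_self hA, ← Complex.ofReal_mul, Real.mul_self_sqrt hr]

lemma diagonal_const_eq_smul_one {d : ℕ} (c : ℂ) :
    diagonal (fun _ : Fin d => c) = c • (1 : Matrix (Fin d) (Fin d) ℂ) := by
  ext i j
  by_cases h : i = j
  · subst h; simp
  · simp [diagonal_apply_ne _ h, Matrix.one_apply_ne h]

lemma fid_at_unif {d : ℕ} (hd : 1 ≤ d) {p : ℝ} (hp0 : 0 ≤ p) (hp1 : p ≤ 1) :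
    fid (rhoM d p) (diagonal fun _ : Fin d => (((d : ℝ)⁻¹ : ℝ) : ℂ))
      = (Real.sqrt (1 - p) + (1 / d) * (Real.sqrt (1 - p + d * p) - Real.sqrt (1 - p))) ^ 2 := by
  have hd0 : (0:ℝ) < d := by exact_mod_cast Nat.lt_of_lt_of_le Nat.zero_lt_one hd
  have hσ : msqrt (diagonal fun _ : Fin d => (((d : ℝ)⁻¹ : ℝ) : ℂ))
      = ((Real.sqrt (d : ℝ)⁻¹ : ℝ) : ℂ) • 1 := by
    rw [msqrt_diagonal (fun i => by positivity)]
    exact diagonal_const_eq_smul_one _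
  have hmid : msqrt (diagonal fun _ : Fin d => (((d : ℝ)⁻¹ : ℝ) : ℂ)) * rhoM d p
      * msqrt (diagonal fun _ : Fin d => (((d : ℝ)⁻¹ : ℝ) : ℂ))
      = (((d : ℝ)⁻¹ : ℝ) : ℂ) • rhoM d p := by
    rw [hσ, smul_mul_assoc, one_mul, mul_smul_comm, mul_one, smul_smul, ← Complex.ofReal_mul,
      Real.mul_self_sqrt (by positivity)]
  rw [fid, hmid, msqrt_smul (rhoM_posSemidef hp0 hp1) (by positivity), msqrt_rhoM hp0 hp1]
  set b : ℝ := Real.sqrt ((1 - p) / d) with hb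
  set a : ℝ := Real.sqrt ((1 - p) / d + p) with ha
  have htr : (((Real.sqrt (d : ℝ)⁻¹ : ℝ) : ℂ) • ((b : ℝ) : ℂ) • (1 : Matrix (Fin d) (Fin d) ℂ)
      + ((Real.sqrt (d : ℝ)⁻¹ : ℝ) : ℂ) • (((a - b : ℝ) : ℂ)) • psiProj d).trace
      = ((Real.sqrt (d : ℝ)⁻¹ * (b * d + (a - b)) : ℝ) : ℂ) := by
    rw [trace_add, trace_smul, trace_smul, trace_smul, trace_smul, trace_one,
      psiProj_trace hd]
    push_cast
    simp only [smul_eq_mul, Fintype.card_fin]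
    push_cast
    ring
  rw [show (((Real.sqrt (d : ℝ)⁻¹ : ℝ) : ℂ) • (((b : ℝ) : ℂ) • (1 : Matrix (Fin d) (Fin d) ℂ)
      + (((a - b : ℝ) : ℂ)) • psiProj d)) = ((Real.sqrt (d : ℝ)⁻¹ : ℝ) : ℂ)
        • ((b : ℝ) : ℂ) • (1 : Matrix (Fin d) (Fin d) ℂ)
      + ((Real.sqrt (d : ℝ)⁻¹ : ℝ) : ℂ) • (((a - b : ℝ) : ℂ)) • psiProj d from smul_add _ _ _,
    htr, Complex.ofReal_re]
  -- now pure real arithmetic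
  have sd0 : (0:ℝ) < Real.sqrt d := Real.sqrt_pos.mpr hd0
  have hdd : (d : ℝ) = Real.sqrt d * Real.sqrt d := (Real.mul_self_sqrt hd0.le).symm
  have hbv : b = Real.sqrt (1 - p) / Real.sqrt d := by
    rw [hb, Real.sqrt_div (by linarith)]
  have hav : a = Real.sqrt (1 - p + d * p) / Real.sqrt d := by
    rw [ha, show (1 - p) / d + p = (1 - p + d * p) / d by field_simp,
      Real.sqrt_div (by nlinarith)]
  have hinv : Real.sqrt (d : ℝ)⁻¹ = 1 / Real.sqrt d := by
    rw [Real.sqrt_inv, one_div]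
  rw [hbv, hav, hinv]
  congr 1
  rw [hdd]
  field_simp
  rw [Real.sqrt_sq sd0.le]

set_option maxHeartbeats 1000000 in
lemma fid_le {d : ℕ} (hd : 1 ≤ d) {p : ℝ} (hp0 : 0 ≤ p) (hp1 : p ≤ 1)
    {σ : Matrix (Fin d) (Fin d) ℂ} (hσ : IsIncoherent σ) :
    fid (rhoM d p) σ
      ≤ (Real.sqrt (1 - p) + (1 / d) * (Real.sqrt (1 - p + d * p) - Real.sqrt (1 - p))) ^ 2 := by
  obtain ⟨⟨hpsd, htr⟩, hdiag⟩ := hσ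
  have hd0 : (0:ℝ) < d := by exact_mod_cast Nat.lt_of_lt_of_le Nat.zero_lt_one hd
  set s : Fin d → ℝ := fun i => (σ i i).re with hsdef
  have hs : ∀ i, 0 ≤ s i := fun i => (Complex.nonneg_iff.mp (psd_diag_entry hpsd i)).1
  have hσdiag : σ = diagonal (fun i => ((s i : ℝ) : ℂ)) := by
    ext i j
    by_cases h : i = j
    · subst h
      rw [diagonal_apply_eq]
      have him := (Complex.nonneg_iff.mp (psd_diag_entry hpsd i)).2
      exact Complex.ext (by simp [hsdef]) (by simp [← him])
    · rw [diagonal_apply_ne _ h]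
      exact hdiag h
  have hsum : ∑ i, s i = 1 := by
    have h1 := congrArg Complex.re htr
    rw [trace] at h1
    simpa [diag, Complex.re_sum] using h1
  set b : ℝ := Real.sqrt ((1 - p) / d) with hb
  set a : ℝ := Real.sqrt ((1 - p) / d + p) with ha
  have hbd : (0:ℝ) ≤ (1 - p) / d := div_nonneg (by linarith) hd0.le
  have hab : b ≤ a := Real.sqrt_le_sqrt (by linarith)
  have hb0 : 0 ≤ b := Real.sqrt_nonneg _
  have hSσ : msqrt σ = diagonal (fun i => ((Real.sqrt (s i) : ℝ) : ℂ)) := by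
    rw [hσdiag, msqrt_diagonal hs]
  set Sρ := msqrt (rhoM d p) with hSρdef
  set X := Sρ * msqrt σ with hX
  have hXX : Xᴴ * X = msqrt σ * rhoM d p * msqrt σ := by
    rw [hX, conjTranspose_mul, (msqrt_posSemidef (rhoM_posSemidef hp0 hp1)).1.eq,
      (msqrt_posSemidef hpsd).1.eq]
    calc msqrt σ * Sρ * (Sρ * msqrt σ) = msqrt σ * (Sρ * Sρ) * msqrt σ := by noncomm_ring
      _ = msqrt σ * rhoM d p * msqrt σ := by
          rw [hSρdef, msqrt_mul_self (rhoM_posSemidef hp0 hp1)]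
  obtain ⟨V, hV, hVX⟩ := exists_contraction X
  have hfid : fid (rhoM d p) σ = ((Vᴴ * X).trace.re) ^ 2 := by
    rw [fid, ← hXX, hVX]
  set c : ℂ := ((a - b : ℝ) : ℂ) * (1 / d) with hc
  set r : Fin d → ℂ := fun i => ((Real.sqrt (s i) : ℝ) : ℂ) with hr
  have hA : ∀ j i, (msqrt (rhoM d p)) j i
      = (b : ℂ) * (if j = i then 1 else 0) + ((a - b : ℝ) : ℂ) * (1 / d) := by
    intro j i
    rw [msqrt_rhoM hp0 hp1, Matrix.add_apply, Matrix.smul_apply, Matrix.smul_apply,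
      Matrix.one_apply]
    simp only [psiProj, Matrix.of_apply, smul_eq_mul]
    rfl
  have hXent : ∀ j i, X j i
      = ((b : ℂ) * (if j = i then 1 else 0) + c) * r i := by
    intro j i
    rw [hX, hSσ, Matrix.mul_diagonal, hSρdef, hA j i, hc]
  have hterm : ∀ i j, (starRingEnd ℂ) (V j i) * X j i
      = (if j = i then (b : ℂ) * ((starRingEnd ℂ) (V i i) * r i) else 0)
        + c * ((starRingEnd ℂ) (V j i) * r i) := by
    intro i j
    rw [hXent]
    by_cases h : j = i
    · subst h; simp only [eq_self_iff_true, if_true]; ring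
    · simp only [if_neg h]; ring
  have htrace : (Vᴴ * X).trace
      = (b : ℂ) * (∑ i, (starRingEnd ℂ) (V i i) * r i)
        + c * (∑ i, r i * (∑ j, (starRingEnd ℂ) (V j i))) := by
    rw [trace]
    have hdg : ∀ i, (Vᴴ * X).diag i = ∑ j, (starRingEnd ℂ) (V j i) * X j i := by
      intro i
      simp [diag, Matrix.mul_apply, conjTranspose_apply, RCLike.star_def]
    rw [Finset.sum_congr rfl fun i _ => hdg i]
    rw [Finset.sum_congr rfl fun i _ => Finset.sum_congr rfl fun j _ => hterm i j]
    rw [Finset.sum_congr rfl fun i _ => Finset.sum_add_distrib]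
    rw [Finset.sum_add_distrib, Finset.mul_sum, Finset.mul_sum]
    congr 1
    · exact Finset.sum_congr rfl fun i _ => by simp
    · refine Finset.sum_congr rfl fun i _ => ?_
      rw [← Finset.mul_sum]
      congr 1
      rw [← Finset.sum_mul, mul_comm]
  -- abbreviations
  set T1 : ℂ := ∑ i, (starRingEnd ℂ) (V i i) * r i with hT1def
  set T2 : ℂ := ∑ i, r i * (∑ j, (starRingEnd ℂ) (V j i)) with hT2def
  set S : ℝ := ∑ i, Real.sqrt (s i) with hSdef
  have hS0 : 0 ≤ S := Finset.sum_nonneg fun i _ => Real.sqrt_nonneg _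
  -- T1 bound
  have hT1 : T1.re ≤ S := by
    rw [hT1def, Complex.re_sum, hSdef]
    refine Finset.sum_le_sum fun i _ => ?_
    calc ((starRingEnd ℂ) (V i i) * r i).re ≤ ‖(starRingEnd ℂ) (V i i) * r i‖ :=
          Complex.re_le_norm _
      _ = ‖V i i‖ * Real.sqrt (s i) := by
          simp [_root_.map_mul, Complex.norm_conj, hr, Complex.norm_real, Real.norm_eq_abs,
            abs_of_nonneg (Real.sqrt_nonneg _)]
      _ ≤ 1 * Real.sqrt (s i) :=
          mul_le_mul_of_nonneg_right (contraction_diag hV i) (Real.sqrt_nonneg _)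
      _ = Real.sqrt (s i) := one_mul _
  -- T2 bound
  have hnormr : ∑ i, Complex.normSq (r i) = 1 := by
    rw [hr]
    calc ∑ i, Complex.normSq ((Real.sqrt (s i) : ℝ) : ℂ)
        = ∑ i, s i := Finset.sum_congr rfl fun i _ => by
          rw [Complex.normSq_ofReal, Real.mul_self_sqrt (hs i)]
      _ = 1 := hsum
  have hVr := contraction_mulVec hV r
  rw [hnormr] at hVr
  have hT2conj : T2 = (starRingEnd ℂ) (∑ j, (V *ᵥ r) j) := by
    rw [hT2def, map_sum]
    have h1 : ∀ j, (starRingEnd ℂ) ((V *ᵥ r) j) = ∑ i, (starRingEnd ℂ) (V j i) * r i := by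
      intro j
      rw [show (V *ᵥ r) j = ∑ i, V j i * r i by simp [mulVec, dotProduct], map_sum]
      refine Finset.sum_congr rfl fun i _ => ?_
      simp [_root_.map_mul, hr, Complex.conj_ofReal]
    rw [Finset.sum_congr rfl fun j _ => h1 j, Finset.sum_comm]
    refine Finset.sum_congr rfl fun i _ => ?_
    rw [Finset.mul_sum]
    exact Finset.sum_congr rfl fun j _ => mul_comm _ _
  have habsY : ‖∑ j, (V *ᵥ r) j‖ ≤ Real.sqrt d := by
    have h1 : ‖∑ j, (V *ᵥ r) j‖ ≤ ∑ j, ‖(V *ᵥ r) j‖ :=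
      norm_sum_le _ _
    have h2 : (∑ j, ‖(V *ᵥ r) j‖) ^ 2
        ≤ (d : ℝ) * ∑ j, ‖(V *ᵥ r) j‖ ^ 2 := by
      simpa using sq_sum_le_card_mul_sum_sq
        (s := Finset.univ) (f := fun j => ‖(V *ᵥ r) j‖)
    have h3 : ∑ j, ‖(V *ᵥ r) j‖ ^ 2 ≤ 1 := by
      calc ∑ j, ‖(V *ᵥ r) j‖ ^ 2
          = ∑ j, Complex.normSq ((V *ᵥ r) j) := Finset.sum_congr rfl fun j _ => Complex.sq_norm _
        _ ≤ 1 := hVr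
    have h4 : (∑ j, ‖(V *ᵥ r) j‖) ^ 2 ≤ (d : ℝ) := by nlinarith
    have h5 : ∑ j, ‖(V *ᵥ r) j‖ ≤ Real.sqrt d := by
      have hnn : 0 ≤ ∑ j, ‖(V *ᵥ r) j‖ :=
        Finset.sum_nonneg fun j _ => norm_nonneg _
      nlinarith [Real.sq_sqrt hd0.le, Real.sqrt_nonneg (d : ℝ)]
    linarith
  have hT2 : T2.re ≤ Real.sqrt d := by
    rw [hT2conj, Complex.conj_re]
    exact le_trans (Complex.re_le_norm _) habsY
  -- S bound
  have hSd : S ≤ Real.sqrt d := by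
    have h2 : S ^ 2 ≤ (d : ℝ) * ∑ i, Real.sqrt (s i) ^ 2 := by
      simpa [hSdef] using sq_sum_le_card_mul_sum_sq
        (s := Finset.univ) (f := fun i => Real.sqrt (s i))
    have h3 : ∑ i, Real.sqrt (s i) ^ 2 = 1 := by
      rw [Finset.sum_congr rfl fun i _ => Real.sq_sqrt (hs i)]
      exact hsum
    rw [h3, mul_one] at h2
    nlinarith [Real.sq_sqrt hd0.le, Real.sqrt_nonneg (d : ℝ)]
  -- real form of c
  have hc2 : c = (((a - b) / d : ℝ) : ℂ) := by rw [hc]; push_cast; ring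
  have habd : 0 ≤ (a - b) / d := div_nonneg (by linarith) hd0.le
  have htre : (Vᴴ * X).trace.re = b * T1.re + ((a - b) / d) * T2.re := by
    rw [htrace, hc2]
    simp [Complex.add_re, Complex.mul_re]
  have hbound : (Vᴴ * X).trace.re ≤ b * Real.sqrt d + ((a - b) / d) * Real.sqrt d := by
    rw [htre]
    have e1 : b * T1.re ≤ b * Real.sqrt d :=
      mul_le_mul_of_nonneg_left (le_trans hT1 hSd) hb0
    have e2 : ((a - b) / d) * T2.re ≤ ((a - b) / d) * Real.sqrt d :=
      mul_le_mul_of_nonneg_left hT2 habd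
    linarith
  -- value identification
  have sd0 : (0:ℝ) < Real.sqrt d := Real.sqrt_pos.mpr hd0
  have hdd : (d : ℝ) = Real.sqrt d * Real.sqrt d := (Real.mul_self_sqrt hd0.le).symm
  have hbv : b = Real.sqrt (1 - p) / Real.sqrt d := by
    rw [hb, Real.sqrt_div (by linarith)]
  have hav : a = Real.sqrt (1 - p + d * p) / Real.sqrt d := by
    rw [ha, show (1 - p) / d + p = (1 - p + d * p) / d by field_simp,
      Real.sqrt_div (by nlinarith)]
  have hval : b * Real.sqrt d + ((a - b) / d) * Real.sqrt d
      = Real.sqrt (1 - p) + (1 / d) * (Real.sqrt (1 - p + d * p) - Real.sqrt (1 - p)) := by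
    have e1 : b * Real.sqrt d = Real.sqrt (1 - p) := by
      rw [hbv, div_mul_cancel₀ _ sd0.ne']
    have e2 : ((a - b) / d) * Real.sqrt d
        = (1 / d) * (Real.sqrt (1 - p + d * p) - Real.sqrt (1 - p)) := by
      rw [hav, hbv, div_sub_div_same, hdd]
      field_simp
    rw [e1, e2]
  have htrnn : 0 ≤ (Vᴴ * X).trace.re := by
    rw [← hVX]
    exact trace_re_nonneg (msqrt_posSemidef (posSemidef_conjTranspose_mul_self X))
  have hvnn : 0 ≤ b * Real.sqrt d + ((a - b) / d) * Real.sqrt d := by positivity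
  rw [hfid, ← hval]
  exact pow_le_pow_left₀ htrnn (hval ▸ (hval.symm ▸ hbound)) 2


/-- The geometric measure of coherence of the maximally coherent mixed state. -/
theorem geometric_coherence_rhoM {d : ℕ} (hd : 1 ≤ d) (p : ℝ) (hp0 : 0 < p) (hp1 : p ≤ 1) :
    Cg (rhoM d p) =
      1 - (Real.sqrt (1 - p) +
        (1 / d) * (Real.sqrt (1 - p + d * p) - Real.sqrt (1 - p))) ^ 2 := by
  have hd0 : (0:ℝ) < d := by exact_mod_cast Nat.lt_of_lt_of_le Nat.zero_lt_one hd
  set F0 : ℝ := (Real.sqrt (1 - p) +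
    (1 / d) * (Real.sqrt (1 - p + d * p) - Real.sqrt (1 - p))) ^ 2 with hF0
  have hinc : IsIncoherent (diagonal fun _ : Fin d => (((d : ℝ)⁻¹ : ℝ) : ℂ)) := by
    refine ⟨⟨posSemidef_diagonal_iff.mpr fun i => Complex.zero_le_real.mpr (by positivity), ?_⟩,
      isDiag_diagonal _⟩
    rw [trace]
    simp only [diag_diagonal, Finset.sum_const, Finset.card_univ, Fintype.card_fin,
      nsmul_eq_mul]
    rw [← Complex.ofReal_natCast, ← Complex.ofReal_mul, mul_inv_cancel₀ hd0.ne',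
      Complex.ofReal_one]
  have hgreatest : IsGreatest
      {x : ℝ | ∃ σ : Matrix (Fin d) (Fin d) ℂ, IsIncoherent σ ∧ x = fid (rhoM d p) σ} F0 := by
    constructor
    · exact ⟨_, hinc, (fid_at_unif hd hp0.le hp1).symm⟩
    · rintro x ⟨σ, hσ, rfl⟩
      exact fid_le hd hp0.le hp1 hσ
  rw [Cg, hgreatest.csSup_eq]
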